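/- Let e ≥ 1 and a,b ∈ ℕ with 1 ≤ a ≤ q-2 and 0 ≤ b - ea ≤ q-2. Then the minimum distance d^⊥ of the dual code C_{A,e}(a,b)^⊥ satisfies min{a, b-ea} + 2 ≤ d^⊥ ≤ min{a, b} + 2. -/

import Mathlib

/-!
Lower bound: let `x` be a nonzero dual codeword supported on `{p₀} ∪ E`, where `p₀ = (α₀, β₀)`
and `|E| ≤ min{a, b - ea}`. Take `P` vanishing at the first coordinates of the points of `E` off
the line `α = α₀` and `Q` vanishing at the second coordinates of the points of `E` on it. Then
`deg P ≤ a` and `deg Q ≤ b - ea`, so `P(α) Q(β)` is a codeword of `C_{A,e}(a,b)`, yet its pairing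
with `x` is `x(p₀) P(α₀) Q(β₀) ≠ 0`.

Upper bound: by counting dimensions, `n + 2` points of `F` carry a nonzero vector `y` orthogonal
to all polynomials of degree `≤ n`. Then `y ⊗ δ₀` (with `n = a`) and `δ₀ ⊗ y` (with `n = b`) are
dual codewords of weights at most `a + 2` and `b + 2`.
-/

noncomputable def dualCode (F : Type*) [Field F] {ι : Type*} [Fintype ι]
    (C : Submodule F (ι → F)) : Submodule F (ι → F) where
  carrier := {x | ∀ c ∈ C, ∑ i, x i * c i = 0}
  zero_mem' := by intro c _; simp
  add_mem' := by
    intro x y hx hy c hc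
    simp only [Pi.add_apply, add_mul, Finset.sum_add_distrib]
    rw [hx c hc, hy c hc, add_zero]
  smul_mem' := by
    intro a x hx c hc
    simp only [Pi.smul_apply, smul_eq_mul, mul_assoc, ← Finset.mul_sum]
    rw [hx c hc, mul_zero]

noncomputable def minDist (F : Type*) [Field F] {ι : Type*} [Fintype ι] [DecidableEq F]
    (C : Submodule F (ι → F)) : ℕ :=
  sInf {w | ∃ c ∈ C, c ≠ 0 ∧ hammingNorm c = w}

/-- The weight of a matrix codeword: the number of nonzero entries. -/
noncomputable def wt2 {F : Type*} [Zero F] [DecidableEq F] {ι₁ ι₂ : Type*} [Fintype ι₁]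
    [Fintype ι₂] (m : ι₂ → ι₁ → F) : ℕ :=
  hammingNorm (fun p : ι₂ × ι₁ => m p.1 p.2)

noncomputable def minDist2 (F : Type*) [Field F] [DecidableEq F] {ι₁ ι₂ : Type*} [Fintype ι₁]
    [Fintype ι₂] (C : Submodule F (ι₂ → ι₁ → F)) : ℕ :=
  sInf {w | ∃ m ∈ C, m ≠ 0 ∧ wt2 m = w}

noncomputable def dualCode2 (F : Type*) [Field F] {ι₁ ι₂ : Type*} [Fintype ι₁] [Fintype ι₂]
    (C : Submodule F (ι₂ → ι₁ → F)) : Submodule F (ι₂ → ι₁ → F) where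
  carrier := {x | ∀ c ∈ C, ∑ i, ∑ j, x i j * c i j = 0}
  zero_mem' := by intro c _; simp
  add_mem' := by
    intro x y hx hy c hc
    simp only [Pi.add_apply, add_mul, Finset.sum_add_distrib]
    rw [hx c hc, hy c hc, add_zero]
  smul_mem' := by
    intro a x hx c hc
    simp only [Pi.smul_apply, smul_eq_mul, mul_assoc, ← Finset.mul_sum]
    rw [hx c hc, mul_zero]

/-- The affine Reed–Solomon code `RS_q(k)`: evaluations of polynomials of degree `< k` at
all elements of `F`.  By convention it is `{0}` for `k ≤ 0` and the full space for `k ≥ q`. -/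
noncomputable def RS (F : Type*) [Field F] (k : ℤ) : Submodule F (F → F) :=
  (Polynomial.degreeLT F k.toNat).map
    (LinearMap.pi fun α : F => (Polynomial.aeval α).toLinearMap)

/-- The linear map `c ↦ v ⊗ c`, sending a word `c` to the matrix `(v i * c j)_{i,j}`. -/
noncomputable def vTensor (F : Type*) [Field F] {ι₁ ι₂ : Type*} (v : ι₁ → F) :
    (ι₂ → F) →ₗ[F] (ι₁ → ι₂ → F) where
  toFun c := fun i j => v i * c j
  map_add' c d := by funext i j; simp [mul_add]
  map_smul' a c := by funext i j; simp only [Pi.smul_apply, smul_eq_mul, RingHom.id_apply]; ring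

/-- The code `C_{𝔸,e}(a,b) = Σ_{d=0}^{a} ⟨(α^d)_α⟩ ⊗ RS_q(b - ed + 1) ⊆ F^{q²}`,
the evaluation code on the affine chart of the Hirzebruch surface `H_e`.  A codeword is a
matrix indexed by `F × F`, the entry at `(α, β)` being `α^d · f(β)`. -/
noncomputable def CA (F : Type*) [Field F] (e a b : ℕ) : Submodule F (F → F → F) :=
  ⨆ d ∈ Finset.Iic a, (RS F ((b : ℤ) - e * d + 1)).map (vTensor F fun α : F => α ^ d)

open Polynomial Finset

section Codes

variable {F : Type*} [Field F] {ι₁ ι₂ : Type*}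

lemma vTensor_ne_zero {u : ι₁ → F} {v : ι₂ → F} (hu : u ≠ 0) (hv : v ≠ 0) :
    vTensor F u v ≠ 0 := by
  obtain ⟨i, hi⟩ := Function.ne_iff.mp hu
  obtain ⟨j, hj⟩ := Function.ne_iff.mp hv
  exact Function.ne_iff.mpr ⟨i, Function.ne_iff.mpr ⟨j, mul_ne_zero hi hj⟩⟩

variable [Fintype ι₁] [Fintype ι₂]

noncomputable def pairing2 (x : ι₂ → ι₁ → F) : (ι₂ → ι₁ → F) →ₗ[F] F where
  toFun c := ∑ i, ∑ j, x i j * c i j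
  map_add' c d := by simp only [Pi.add_apply, mul_add, sum_add_distrib]
  map_smul' r c := by
    simp only [Pi.smul_apply, smul_eq_mul, RingHom.id_apply, mul_sum, mul_left_comm]

lemma mem_dualCode2_iff_le_ker {C : Submodule F (ι₂ → ι₁ → F)} {x : ι₂ → ι₁ → F} :
    x ∈ dualCode2 F C ↔ C ≤ LinearMap.ker (pairing2 x) :=
  Iff.rfl

lemma sum_sum_vTensor_mul (u w : ι₁ → F) (v z : ι₂ → F) :
    ∑ i, ∑ j, vTensor F u v i j * (w i * z j) = (∑ i, u i * w i) * ∑ j, v j * z j := by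
  simp only [vTensor, LinearMap.coe_mk, AddHom.coe_mk, sum_mul_sum]
  exact sum_congr rfl fun i _ => sum_congr rfl fun j _ => by ring

variable [DecidableEq F]

lemma wt2_vTensor (u : ι₁ → F) (v : ι₂ → F) :
    wt2 (vTensor F u v) = hammingNorm u * hammingNorm v := by
  simp only [wt2, hammingNorm, vTensor, LinearMap.coe_mk, AddHom.coe_mk, ne_eq, mul_eq_zero,
    not_or, ← card_product, ← filter_product, univ_product_univ]

lemma hammingNorm_pi_single_one [DecidableEq ι₁] (i : ι₁) :
    hammingNorm (Pi.single (M := fun _ => F) i 1) = 1 := by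
  simp [hammingNorm, Pi.single_apply, filter_eq']

lemma minDist2_le {C : Submodule F (ι₂ → ι₁ → F)} {x : ι₂ → ι₁ → F} (hx : x ∈ C) (hx0 : x ≠ 0) :
    minDist2 F C ≤ wt2 x :=
  Nat.sInf_le ⟨x, hx, hx0, rfl⟩

lemma le_minDist2 {C : Submodule F (ι₂ → ι₁ → F)} {n : ℕ} (hC : ∃ x ∈ C, x ≠ 0)
    (h : ∀ x ∈ C, x ≠ 0 → n ≤ wt2 x) : n ≤ minDist2 F C := by
  obtain ⟨x, hx, hx0⟩ := hC
  refine le_csInf ⟨_, x, hx, hx0, rfl⟩ ?_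
  rintro _ ⟨y, hy, hy0, rfl⟩
  exact h y hy hy0

end Codes

lemma sum_mul_eval_eq_zero_of_sum_mul_pow_eq_zero {R ι : Type*} [CommSemiring R] [Fintype ι]
    {v y : ι → R} {n : ℕ} (h : ∀ d ≤ n, ∑ i, y i * v i ^ d = 0) {f : R[X]}
    (hf : f.natDegree ≤ n) : ∑ i, y i * f.eval (v i) = 0 := by
  calc ∑ i, y i * f.eval (v i) = ∑ d ∈ range (n + 1), f.coeff d * ∑ i, y i * v i ^ d := by
        simp_rw [eval_eq_sum_range' (Nat.lt_succ_of_le hf), mul_sum]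
        rw [sum_comm]
        exact sum_congr rfl fun d _ => sum_congr rfl fun i _ => by ring
    _ = 0 := sum_eq_zero fun d hd => by rw [h d (Nat.lt_succ_iff.mp (mem_range.mp hd)), mul_zero]

lemma exists_ne_zero_hammingNorm_le_sum_mul_pow_eq_zero {F : Type*} [Field F] [Fintype F]
    [DecidableEq F] {n : ℕ} (hn : n + 2 ≤ Fintype.card F) :
    ∃ y : F → F, y ≠ 0 ∧ hammingNorm y ≤ n + 2 ∧ ∀ d ≤ n, ∑ α, y α * α ^ d = 0 := by
  obtain ⟨S, -, hS⟩ := exists_subset_card_eq (s := (univ : Finset F)) (by simpa using hn)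
  let extendByZero := Function.ExtendByZero.linearMap F ((↑) : S → F)
  have hinj : Function.Injective extendByZero :=
    Function.extend_injective Subtype.val_injective _
  let powerSums := (Matrix.of fun (α : F) (d : Fin (n + 1)) => α ^ (d : ℕ)).vecMulLinear
  obtain ⟨z, hz, hz0⟩ := (Submodule.ne_bot_iff _).mp
    (LinearMap.ker_ne_bot_of_finrank_lt (f := powerSums ∘ₗ extendByZero) (by simp [hS]))
  refine ⟨extendByZero z, (map_ne_zero_iff _ hinj).mpr hz0, ?_,
    fun d hd => congrFun hz ⟨d, by omega⟩⟩
  refine hS ▸ card_le_card fun α hα => ?_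
  by_contra hαS
  refine (mem_filter.mp hα).2 (Function.extend_apply' _ _ _ ?_)
  rintro ⟨s, rfl⟩
  exact hαS s.2

lemma exists_eval_mul_eval_separating {R : Type*} [CommRing R] [IsDomain R]
    {E : Finset (R × R)} {p₀ : R × R} (hp₀ : p₀ ∉ E) :
    ∃ P Q : R[X], P.natDegree ≤ #E ∧ Q.natDegree ≤ #E ∧ P.eval p₀.1 * Q.eval p₀.2 ≠ 0 ∧
      ∀ p ∈ E, P.eval p.1 * Q.eval p.2 = 0 := by
  classical
  refine ⟨∏ p ∈ E with p.1 ≠ p₀.1, (X - C p.1), ∏ p ∈ E with p.1 = p₀.1, (X - C p.2),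
    by simpa using card_filter_le _ _, by simpa using card_filter_le _ _, ?_, fun p hp => ?_⟩
  · simp only [eval_prod, eval_sub, eval_X, eval_C]
    refine mul_ne_zero (prod_ne_zero_iff.mpr fun p hp => sub_ne_zero.mpr (mem_filter.mp hp).2.symm)
      (prod_ne_zero_iff.mpr fun p hp => sub_ne_zero.mpr fun h => hp₀ ?_)
    obtain ⟨hpE, h₁⟩ := mem_filter.mp hp
    exact Prod.ext h₁ h.symm ▸ hpE
  · simp only [eval_prod, eval_sub, eval_X, eval_C]
    by_cases h₁ : p.1 = p₀.1
    · exact mul_eq_zero_of_right _ (prod_eq_zero (mem_filter.mpr ⟨hp, h₁⟩) (sub_self p.2))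
    · exact mul_eq_zero_of_left (prod_eq_zero (mem_filter.mpr ⟨hp, h₁⟩) (sub_self p.1)) _

section CA

variable {F : Type*} [Field F] {e a b : ℕ}

lemma pow_mul_eval_mem_CA {d : ℕ} (hd : d ≤ a) {f : F[X]} (hf : f.natDegree + e * d ≤ b) :
    (fun α β : F => α ^ d * f.eval β) ∈ CA F e a b := by
  have hRS : (fun β => f.eval β) ∈ RS F ((b : ℤ) - e * d + 1) := by
    refine ⟨f, mem_degreeLT.mpr (degree_le_natDegree.trans_lt ?_), by ext; simp [coe_aeval_eq_eval]⟩
    exact_mod_cast (by omega : f.natDegree < ((b : ℤ) - e * d + 1).toNat)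
  exact Submodule.mem_iSup_of_mem d
    (Submodule.mem_iSup_of_mem (mem_Iic.mpr hd) (Submodule.mem_map_of_mem hRS))

lemma eval_mul_eval_mem_CA {P Q : F[X]} (hP : P.natDegree ≤ a) (hQ : Q.natDegree + e * a ≤ b) :
    (fun α β : F => P.eval α * Q.eval β) ∈ CA F e a b := by
  have hsum : (fun α β : F => P.eval α * Q.eval β) =
      ∑ d ∈ range (a + 1), P.coeff d • fun α β : F => α ^ d * Q.eval β := by
    ext α β
    simp [eval_eq_sum_range' (Nat.lt_succ_of_le hP), sum_mul, mul_assoc]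
  rw [hsum]
  refine Submodule.sum_mem _ fun d hd => Submodule.smul_mem _ _ (pow_mul_eval_mem_CA ?_ ?_)
  · exact Nat.lt_succ_iff.mp (mem_range.mp hd)
  · have := Nat.mul_le_mul_left e (Nat.lt_succ_iff.mp (mem_range.mp hd))
    omega

variable [Fintype F]

lemma mem_dualCode2_CA_of {x : F → F → F}
    (h : ∀ d ≤ a, ∀ f ∈ degreeLT F ((b : ℤ) - e * d + 1).toNat,
      ∑ α, ∑ β, x α β * (α ^ d * f.eval β) = 0) :
    x ∈ dualCode2 F (CA F e a b) := by
  refine mem_dualCode2_iff_le_ker.mpr (iSup₂_le fun d hd => Submodule.map_le_iff_le_comap.mpr ?_)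
  rintro _ ⟨f, hf, rfl⟩
  simpa [pairing2, vTensor, coe_aeval_eq_eval] using h d (mem_Iic.mp hd) f hf

lemma vTensor_mem_dualCode2_CA {u v : F → F}
    (h : ∀ d ≤ a, ∀ f ∈ degreeLT F ((b : ℤ) - e * d + 1).toNat,
      (∑ α, u α * α ^ d) * ∑ β, v β * f.eval β = 0) :
    vTensor F u v ∈ dualCode2 F (CA F e a b) :=
  mem_dualCode2_CA_of fun d hd f hf => (sum_sum_vTensor_mul _ _ _ _).trans (h d hd f hf)

variable [DecidableEq F]

lemma min_add_two_le_wt2_of_mem_dualCode2_CA (hb : e * a ≤ b) {x : F → F → F}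
    (hx : x ∈ dualCode2 F (CA F e a b)) (hx0 : x ≠ 0) : min a (b - e * a) + 2 ≤ wt2 x := by
  obtain ⟨p₀, hp₀⟩ : ∃ p : F × F, x p.1 p.2 ≠ 0 := by
    by_contra! h
    exact hx0 (funext fun α => funext fun β => h (α, β))
  set T : Finset (F × F) := {p | x p.1 p.2 ≠ 0}
  have hp₀T : p₀ ∈ T := by simpa [T] using hp₀
  by_contra! hlt
  have hE : #(T.erase p₀) ≤ min a (b - e * a) := by
    rw [card_erase_of_mem hp₀T]
    exact Nat.sub_le_of_le_add (Nat.lt_succ_iff.mp hlt)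
  obtain ⟨P, Q, hP, hQ, hPQ₀, hPQ⟩ := exists_eval_mul_eval_separating (notMem_erase p₀ T)
  have hmem : (fun α β : F => P.eval α * Q.eval β) ∈ CA F e a b := by
    refine eval_mul_eval_mem_CA (hP.trans (hE.trans (min_le_left _ _))) ?_
    have := hQ.trans (hE.trans (min_le_right _ _))
    omega
  have hpair : ∑ p : F × F, x p.1 p.2 * (P.eval p.1 * Q.eval p.2) = 0 := by
    rw [Fintype.sum_prod_type]
    exact hx _ hmem
  rw [sum_eq_single p₀ (fun p _ hp => ?_) (by simp)] at hpair
  · exact mul_ne_zero hp₀ hPQ₀ hpair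
  by_cases hxp : x p.1 p.2 = 0
  · rw [hxp, zero_mul]
  · rw [hPQ p (mem_erase.mpr ⟨hp, by simpa [T] using hxp⟩), mul_zero]

lemma exists_mem_dualCode2_CA_wt2_le_left (ha : a + 2 ≤ Fintype.card F) :
    ∃ x ∈ dualCode2 F (CA F e a b), x ≠ 0 ∧ wt2 x ≤ a + 2 := by
  obtain ⟨y, hy0, hy, hsum⟩ := exists_ne_zero_hammingNorm_le_sum_mul_pow_eq_zero ha
  refine ⟨vTensor F y (Pi.single 0 1), ?_, vTensor_ne_zero hy0 (by simp), ?_⟩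
  · exact vTensor_mem_dualCode2_CA fun d hd _ _ => by rw [hsum d hd, zero_mul]
  · rwa [wt2_vTensor, hammingNorm_pi_single_one, mul_one]

lemma exists_mem_dualCode2_CA_wt2_le_right (hb : b + 2 ≤ Fintype.card F) :
    ∃ x ∈ dualCode2 F (CA F e a b), x ≠ 0 ∧ wt2 x ≤ b + 2 := by
  obtain ⟨y, hy0, hy, hsum⟩ := exists_ne_zero_hammingNorm_le_sum_mul_pow_eq_zero hb
  refine ⟨vTensor F (Pi.single 0 1) y, ?_, vTensor_ne_zero (by simp) hy0, ?_⟩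
  · refine vTensor_mem_dualCode2_CA fun d _ f hf => mul_eq_zero_of_right _ ?_
    have hed : (0 : ℤ) ≤ e * d := by positivity
    have hf' : f.degree < ↑(b + 1) := mem_degreeLT.mp (degreeLT_mono (by omega) hf)
    exact sum_mul_eval_eq_zero_of_sum_mul_pow_eq_zero (v := id) hsum
      (natDegree_le_iff_degree_le.mpr (Order.le_of_lt_succ hf'))
  · rwa [wt2_vTensor, hammingNorm_pi_single_one, one_mul]

end CA

theorem CA_dual_minDist_general (F : Type*) [Field F] [Fintype F] [DecidableEq F] (q e a b : ℕ)
    (hq : Fintype.card F = q) (ha2 : a ≤ q - 2)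
    (hb1 : e * a ≤ b) :
    min a (b - e * a) + 2 ≤ minDist2 F (dualCode2 F (CA F e a b)) ∧
      minDist2 F (dualCode2 F (CA F e a b)) ≤ min a b + 2 := by
  have hq2 : 2 ≤ q := hq ▸ Fintype.one_lt_card
  obtain ⟨x, hx, hx0, hwt⟩ : ∃ x ∈ dualCode2 F (CA F e a b), x ≠ 0 ∧ wt2 x ≤ min a b + 2 := by
    rcases le_total a b with hab | hba
    · simpa [min_eq_left hab] using
        exists_mem_dualCode2_CA_wt2_le_left (e := e) (b := b) (by omega)
    · simpa [min_eq_right hba] using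
        exists_mem_dualCode2_CA_wt2_le_right (e := e) (a := a) (by omega)
  exact ⟨le_minDist2 ⟨x, hx, hx0⟩ fun y hy hy0 =>
      min_add_two_le_wt2_of_mem_dualCode2_CA hb1 hy hy0,
    (minDist2_le hx hx0).trans hwt⟩

/-- for `e ≥ 1`, `1 ≤ a ≤ q-2` and `0 ≤ b - ea ≤ q-2`, the minimum distance
`d^⊥` of `C_{𝔸,e}(a,b)^⊥` satisfies `min{a, b-ea} + 2 ≤ d^⊥ ≤ min{a, b} + 2`. -/
theorem CA_dual_minDist (F : Type*) [Field F] [Fintype F] [DecidableEq F] (q e a b : ℕ)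
    (hq : Fintype.card F = q) (he : 1 ≤ e) (ha1 : 1 ≤ a) (ha2 : a ≤ q - 2)
    (hb1 : e * a ≤ b) (hb2 : b - e * a ≤ q - 2) :
    min a (b - e * a) + 2 ≤ minDist2 F (dualCode2 F (CA F e a b)) ∧
      minDist2 F (dualCode2 F (CA F e a b)) ≤ min a b + 2 :=
  CA_dual_minDist_general F q e a b hq ha2 hb1
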